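/- For k=2 and |q|<1, (q;q)_∞ · ∑_{i=0}^∞ q^i/(q;q)_i³ = ∑_{i_1=0}^∞ ∑_{i_2=0}^∞ q^{i_1+i_1²+i_2+i_2²+i_1 i_2} / ((q;q)_{i_1} (q;q)_{i_2} (q;q)_{i_1} (q;q)_{i_1+i_2}) where the denominator is (q;q)_{i_1}·(q;q)_{i_2}·(q;q)_{i_1}·(q;q)_{i_1+i_2}. -/

import Mathlib

noncomputable def qPoch (q : ℝ) (n : ℕ) : ℝ := ∏ j ∈ Finset.range n, (1 - q ^ (j + 1))

/-!
The identity `∑_{a+c=m} q^{a(a+r)} / ((q)_a (q)_{a+r} (q)_c) = 1 / ((q)_m (q)_{m+r})`, applied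
to the inner and then to the outer sum, gives `q^M / (q)_M^3 = ∑_{i+j+n=M} F(i,j) · q^n / (q)_n`,
where `F` is the summand of the double series. Summing over `M`, the right-hand side becomes the
Cauchy product of `∑ F` with Euler's series `∑ q^n / (q)_n = 1 / (q;q)_∞`, and multiplying by
`(q;q)_∞` gives the identity.
-/

open Finset Filter Topology

theorem HasSum.sum_antidiagonal {α A : Type*} [AddCommMonoid α] [TopologicalSpace α]
    [ContinuousAdd α] [RegularSpace α] [AddMonoid A] [HasAntidiagonal A]
    {f : A × A → α} {a : α} (h : HasSum f a) :
    HasSum (fun n ↦ ∑ p ∈ antidiagonal n, f p) a :=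
  (HasAntidiagonal.sigmaAntidiagonalEquivProd.hasSum_iff.mpr h).sigma fun n ↦
    (antidiagonal n).hasSum f

theorem Finset.sum_antidiagonal_antidiagonal {M A : Type*} [AddCommMonoid M] [AddMonoid A]
    [HasAntidiagonal A] (f : A → A → A → M) (n : A) :
    ∑ p ∈ antidiagonal n, ∑ q ∈ antidiagonal p.1, f q.1 q.2 p.2 =
      ∑ p ∈ antidiagonal n, ∑ q ∈ antidiagonal p.2, f p.1 q.1 q.2 := by
  rw [sum_sigma', sum_sigma']
  refine sum_bij' (fun x _ ↦ ⟨(x.2.1, x.2.2 + x.1.2), (x.2.2, x.1.2)⟩)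
    (fun x _ ↦ ⟨(x.1.1 + x.2.1, x.2.2), (x.1.1, x.2.1)⟩) ?_ ?_ ?_ ?_ (fun _ _ ↦ rfl)
  all_goals
    rintro ⟨⟨a, b⟩, ⟨c, d⟩⟩
    simp only [mem_sigma, HasAntidiagonal.mem_antidiagonal]
  · rintro ⟨rfl, rfl⟩; simp [add_assoc]
  · rintro ⟨rfl, rfl⟩; simp [add_assoc]
  · rintro ⟨-, rfl⟩; rfl
  · rintro ⟨-, rfl⟩; rfl

theorem qPoch_zero (q : ℝ) : qPoch q 0 = 1 := prod_range_zero _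

theorem qPoch_succ (q : ℝ) (n : ℕ) : qPoch q (n + 1) = qPoch q n * (1 - q ^ (n + 1)) :=
  prod_range_succ _ _

theorem one_sub_pow_succ_ne_zero {q : ℝ} (hq : ∀ n, qPoch q n ≠ 0) (n : ℕ) :
    1 - q ^ (n + 1) ≠ 0 :=
  right_ne_zero_of_mul (qPoch_succ q n ▸ hq (n + 1))

theorem sum_range_pow_div_qPoch {q : ℝ} (hq : ∀ n, qPoch q n ≠ 0) (m : ℕ) :
    ∑ n ∈ range (m + 1), q ^ n / qPoch q n = (qPoch q m)⁻¹ := by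
  induction m with
  | zero => simp [qPoch_zero]
  | succ m ih =>
    rw [sum_range_succ, ih, qPoch_succ]
    have := hq m
    have := one_sub_pow_succ_ne_zero hq m
    field_simp
    ring

noncomputable def durfeeSummand (q : ℝ) (r : ℕ) (p : ℕ × ℕ) : ℝ :=
  q ^ (p.1 * (p.1 + r)) / (qPoch q p.1 * qPoch q (p.1 + r) * qPoch q p.2)

theorem one_sub_pow_mul_durfeeSummand {q : ℝ} (hq : ∀ n, qPoch q n ≠ 0) (r a c : ℕ) :
    (1 - q ^ (c + 1)) * durfeeSummand q r (a, c + 1) = durfeeSummand q r (a, c) := by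
  have := one_sub_pow_succ_ne_zero hq c
  have := hq a; have := hq (a + r); have := hq c
  simp only [durfeeSummand, qPoch_succ]
  field_simp

theorem pow_mul_durfeeSummand_succ {q : ℝ} (hq : ∀ n, qPoch q n ≠ 0) (r a c : ℕ) :
    q ^ c * (1 - q ^ (a + 1)) * durfeeSummand q r (a + 1, c) =
      q ^ (a + c + r + 1) * durfeeSummand q (r + 1) (a, c) := by
  have := one_sub_pow_succ_ne_zero hq a
  have := hq a; have := hq (a + r + 1); have := hq c
  simp only [durfeeSummand, qPoch_succ, ← add_assoc, add_right_comm a 1 r]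
  field_simp
  ring

theorem sum_antidiagonal_durfeeSummand {q : ℝ} (hq : ∀ n, qPoch q n ≠ 0) (m r : ℕ) :
    ∑ p ∈ antidiagonal m, durfeeSummand q r p = (qPoch q m * qPoch q (m + r))⁻¹ := by
  induction m generalizing r with
  | zero => simp [durfeeSummand, qPoch_zero]
  | succ m ih =>
    have hsplit : ∀ p ∈ antidiagonal (m + 1), (1 - q ^ (m + 1)) * durfeeSummand q r p =
        (1 - q ^ p.2) * durfeeSummand q r p + q ^ p.2 * (1 - q ^ p.1) * durfeeSummand q r p := by
      intro p hp
      rw [← mem_antidiagonal.mp hp, pow_add]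
      ring
    have hfirst : ∑ p ∈ antidiagonal (m + 1), (1 - q ^ p.2) * durfeeSummand q r p =
        ∑ p ∈ antidiagonal m, durfeeSummand q r p := by
      simp [Nat.sum_antidiagonal_succ', one_sub_pow_mul_durfeeSummand hq]
    have hsecond : ∑ p ∈ antidiagonal (m + 1), q ^ p.2 * (1 - q ^ p.1) * durfeeSummand q r p =
        q ^ (m + r + 1) * ∑ p ∈ antidiagonal m, durfeeSummand q (r + 1) p := by
      rw [Nat.sum_antidiagonal_succ, mul_sum]
      simp only [pow_zero, sub_self, mul_zero, zero_mul, zero_add]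
      refine sum_congr rfl fun p hp ↦ ?_
      rw [pow_mul_durfeeSummand_succ hq, mem_antidiagonal.mp hp]
    have key : (1 - q ^ (m + 1)) * ∑ p ∈ antidiagonal (m + 1), durfeeSummand q r p =
        (1 - q ^ (m + 1)) * (qPoch q (m + 1) * qPoch q (m + 1 + r))⁻¹ := by
      rw [mul_sum, sum_congr rfl hsplit, sum_add_distrib, hfirst, hsecond, ih, ih,
        ← add_assoc, add_right_comm m 1 r, qPoch_succ q m, qPoch_succ q (m + r)]
      have := one_sub_pow_succ_ne_zero hq m
      have := one_sub_pow_succ_ne_zero hq (m + r)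
      have := hq m; have := hq (m + r)
      field_simp
      ring
    exact mul_left_cancel₀ (one_sub_pow_succ_ne_zero hq m) key

noncomputable def pretzelSummand (q : ℝ) (p : ℕ × ℕ) : ℝ :=
  q ^ (p.1 + p.1 ^ 2 + p.2 + p.2 ^ 2 + p.1 * p.2) /
    (qPoch q p.1 * qPoch q p.2 * qPoch q p.1 * qPoch q (p.1 + p.2))

theorem pretzelSummand_mul_pow_div_qPoch (q : ℝ) (i j n : ℕ) :
    pretzelSummand q (i, j) * (q ^ n / qPoch q n) =
      q ^ (i + j + n) * (q ^ (i * i) / qPoch q i ^ 2) * durfeeSummand q i (j, n) := by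
  simp only [pretzelSummand, durfeeSummand, add_comm j i]
  ring

theorem sum_antidiagonal_pretzelSummand_mul {q : ℝ} (hq : ∀ n, qPoch q n ≠ 0) (m : ℕ) :
    ∑ kl ∈ antidiagonal m, (∑ p ∈ antidiagonal kl.1, pretzelSummand q p) *
      (q ^ kl.2 / qPoch q kl.2) = q ^ m / qPoch q m ^ 3 := by
  simp_rw [sum_mul]
  refine (sum_antidiagonal_antidiagonal (fun i j n ↦ pretzelSummand q (i, j) *
    (q ^ n / qPoch q n)) m).trans ?_
  calc _ = ∑ p ∈ antidiagonal m, q ^ m / qPoch q m * durfeeSummand q 0 p := by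
        refine sum_congr rfl fun p hp ↦ ?_
        obtain ⟨i, k⟩ := p
        rw [← mem_antidiagonal.mp hp]
        calc _ = ∑ x ∈ antidiagonal k,
              q ^ (i + k) * (q ^ (i * i) / qPoch q i ^ 2) * durfeeSummand q i x := by
              refine sum_congr rfl fun x hx ↦ ?_
              rw [pretzelSummand_mul_pow_div_qPoch, add_assoc, mem_antidiagonal.mp hx]
          _ = _ := by
              rw [← mul_sum, sum_antidiagonal_durfeeSummand hq, add_comm k i]
              have := hq i; have := hq k; have := hq (i + k)
              simp only [durfeeSummand, add_zero]
              field_simp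
    _ = q ^ m / qPoch q m ^ 3 := by
        rw [← mul_sum, sum_antidiagonal_durfeeSummand hq, add_zero]
        have := hq m
        field_simp

theorem qPoch_ne_zero {q : ℝ} (hq : |q| < 1) (n : ℕ) : qPoch q n ≠ 0 :=
  prod_ne_zero_iff.mpr fun j _ h ↦ by
    have : |q| ^ (j + 1) < 1 := pow_lt_one₀ (abs_nonneg q) hq j.succ_ne_zero
    rw [← abs_pow, ← sub_eq_zero.mp h, abs_one] at this
    exact this.false

theorem summable_norm_neg_pow_succ {q : ℝ} (hq : |q| < 1) :
    Summable fun n : ℕ ↦ ‖-q ^ (n + 1)‖ := by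
  simpa using (summable_nat_add_iff 1).mpr (summable_geometric_of_lt_one (abs_nonneg q) hq)

theorem tendsto_qPoch {q : ℝ} (hq : |q| < 1) :
    Tendsto (qPoch q) atTop (𝓝 (∏' n : ℕ, (1 - q ^ (n + 1)))) := by
  have := (multipliable_one_add_of_summable (summable_norm_neg_pow_succ hq)).hasProd
  simp only [← sub_eq_add_neg] at this
  exact this.tendsto_prod_nat

theorem tprod_one_sub_pow_succ_ne_zero {q : ℝ} (hq : |q| < 1) :
    ∏' n : ℕ, (1 - q ^ (n + 1)) ≠ 0 := by
  simpa only [sub_eq_add_neg] using tprod_one_add_ne_zero_of_summable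
    (fun n ↦ by simpa only [← sub_eq_add_neg] using one_sub_pow_succ_ne_zero (qPoch_ne_zero hq) n)
    (summable_norm_neg_pow_succ hq)

theorem exists_forall_norm_inv_qPoch_le {q : ℝ} (hq : |q| < 1) :
    ∃ C, ∀ n, ‖(qPoch q n)⁻¹‖ ≤ C := by
  obtain ⟨C, hC⟩ := isBounded_iff_forall_norm_le.mp (Metric.isBounded_range_of_tendsto _
    ((tendsto_qPoch hq).inv₀ (tprod_one_sub_pow_succ_ne_zero hq)))
  exact ⟨C, fun n ↦ hC _ ⟨n, rfl⟩⟩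

theorem summable_norm_pow_div_qPoch {q : ℝ} (hq : |q| < 1) :
    Summable fun n ↦ ‖q ^ n / qPoch q n‖ := by
  obtain ⟨C, hC⟩ := exists_forall_norm_inv_qPoch_le hq
  refine ((summable_geometric_of_lt_one (abs_nonneg q) hq).mul_left C).of_nonneg_of_le
    (fun _ ↦ norm_nonneg _) fun n ↦ ?_
  rw [div_eq_mul_inv, norm_mul, norm_pow, Real.norm_eq_abs, mul_comm]
  exact mul_le_mul_of_nonneg_right (hC n) (by positivity)

theorem hasSum_pow_div_qPoch {q : ℝ} (hq : |q| < 1) :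
    HasSum (fun n ↦ q ^ n / qPoch q n) (∏' n : ℕ, (1 - q ^ (n + 1)))⁻¹ := by
  refine ((summable_norm_pow_div_qPoch hq).of_norm.hasSum_iff_tendsto_nat).mpr
    ((tendsto_add_atTop_iff_nat 1).mp ?_)
  simp_rw [sum_range_pow_div_qPoch (qPoch_ne_zero hq)]
  exact (tendsto_qPoch hq).inv₀ (tprod_one_sub_pow_succ_ne_zero hq)

theorem summable_norm_pretzelSummand {q : ℝ} (hq : |q| < 1) :
    Summable fun p ↦ ‖pretzelSummand q p‖ := by
  obtain ⟨C, hC⟩ := exists_forall_norm_inv_qPoch_le hq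
  lift C to NNReal using (norm_nonneg _).trans (hC 0)
  have hgeom := summable_geometric_of_lt_one (abs_nonneg q) hq
  refine ((hgeom.mul_of_nonneg hgeom (fun _ ↦ by positivity) fun _ ↦ by positivity).mul_left
    ((C : ℝ) ^ 4)).of_nonneg_of_le (fun _ ↦ norm_nonneg _) fun ⟨i, j⟩ ↦ ?_
  have hexp : |q| ^ (i + i ^ 2 + j + j ^ 2 + i * j) ≤ |q| ^ i * |q| ^ j := by
    rw [← pow_add]
    exact pow_le_pow_of_le_one (abs_nonneg q) hq.le (by nlinarith)
  calc ‖pretzelSummand q (i, j)‖ = |q| ^ (i + i ^ 2 + j + j ^ 2 + i * j) *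
        (‖(qPoch q i)⁻¹‖ * ‖(qPoch q j)⁻¹‖ * ‖(qPoch q i)⁻¹‖ * ‖(qPoch q (i + j))⁻¹‖) := by
        simp only [pretzelSummand, div_eq_mul_inv, mul_inv, norm_mul, norm_pow, Real.norm_eq_abs]
    _ ≤ (|q| ^ i * |q| ^ j) * ((C : ℝ) * C * C * C) := by gcongr <;> apply hC
    _ = (C : ℝ) ^ 4 * (|q| ^ i * |q| ^ j) := by ring

theorem pretzel_identity_k_two (q : ℝ) (hq : |q| < 1) :
    (∏' j : ℕ, (1 - q ^ (j + 1))) * ∑' i : ℕ, q ^ i / (qPoch q i) ^ 3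
      = ∑' i₁ : ℕ, ∑' i₂ : ℕ,
          q ^ (i₁ + i₁ ^ 2 + i₂ + i₂ ^ 2 + i₁ * i₂) /
            (qPoch q i₁ * qPoch q i₂ * qPoch q i₁ * qPoch q (i₁ + i₂)) := by
  have hF := summable_norm_pretzelSummand hq
  have hdiag := hF.of_norm.hasSum.sum_antidiagonal
  have hdiag_norm : Summable fun s ↦ ‖∑ p ∈ antidiagonal s, pretzelSummand q p‖ :=
    hF.hasSum.sum_antidiagonal.summable.of_nonneg_of_le (fun _ ↦ norm_nonneg _)
      fun _ ↦ norm_sum_le _ _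
  have hP := tprod_one_sub_pow_succ_ne_zero hq
  calc _ = (∏' j : ℕ, (1 - q ^ (j + 1))) * ∑' m, ∑ kl ∈ antidiagonal m,
          (∑ p ∈ antidiagonal kl.1, pretzelSummand q p) * (q ^ kl.2 / qPoch q kl.2) := by
        simp_rw [sum_antidiagonal_pretzelSummand_mul (qPoch_ne_zero hq)]
    _ = (∏' j : ℕ, (1 - q ^ (j + 1))) * ((∑' s, ∑ p ∈ antidiagonal s, pretzelSummand q p) *
          ∑' n, q ^ n / qPoch q n) := by
        rw [tsum_mul_tsum_eq_tsum_sum_antidiagonal_of_summable_norm hdiag_norm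
          (summable_norm_pow_div_qPoch hq)]
    _ = ∑' p, pretzelSummand q p := by
        rw [hdiag.tsum_eq, (hasSum_pow_div_qPoch hq).tsum_eq]
        field_simp
    _ = _ := hF.of_norm.tsum_prod
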